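/- arXiv:2411.11425 — 4 statements merged into one kernel-verified Lean document; each statement's English description precedes it below -/
import Mathlib

section
/- If a continuous function λ₂:ℝ⁺→ℝ satisfies λ₂(a)·b + λ₂(b) = λ₂(a·b) for all a,b>0, then there exists u∈ℝ such that λ₂(γ)=u·(γ−1) for all γ>0. -/
theorem stmt7 (l : ℝ → ℝ) (hc : ContinuousOn l (Set.Ioi 0))
    (heq : ∀ a b : ℝ, 0 < a → 0 < b → l a * b + l b = l (a * b)) :
    ∃ u : ℝ, ∀ γ : ℝ, 0 < γ → l γ = u * (γ - 1) := by
  refine ⟨l 2, fun γ hγ => ?_⟩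
  have h1 := heq γ 2 hγ two_pos
  have h2 := heq 2 γ two_pos hγ
  rw [mul_comm γ 2] at h1
  linarith
end

section
/- For the gapped order statistics density with gap s and n coordinates on (a,b), the first marginal is Λ^{n,1}_{a,b}(θ) = ((s(n+1)−1)!/((s−1)!(sn−1)!))·(b−a)^{1−s(n+1)}·(b−θ)^{sn−1}·(θ−a)^{s−1} for θ∈(a,b). -/
/-!
Write `p = s - 1`. Up to its normalising constant the density is the product of the gaps,
raised to the power `p`, over increasing chains `a < θ₁ < ⋯ < θₙ < b`. Fixing `θ₁ = θ` splits
off the factor `(θ - a) ^ p` and leaves the same unnormalised density with `n - 1` coordinates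
on `(θ, b)`. Its total mass over `k` coordinates on `(c, d)` is
`p! ^ (k + 1) / (p (k + 1) + k)! · (d - c) ^ (p (k + 1) + k)`, by induction on `k`: integrating
out the first coordinate by Fubini leaves the Beta integral
`∫ t in c..d, (t - c) ^ p * (d - t) ^ q = p! q! / (p + q + 1)! · (d - c) ^ (p + q + 1)`.
-/

open MeasureTheory Set

/-- Joint density of the gapped order statistics with gap size `s` and `k` coordinates
on `(a,b)`. -/
noncomputable def GapD (s : ℕ) (a b : ℝ) (k : ℕ) (θ : Fin k → ℝ) : ℝ :=
  if StrictMono (Fin.cons a (Fin.snoc θ b) : Fin (k + 2) → ℝ) then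
    ((s * (k + 1) - 1).factorial : ℝ) / ((s - 1).factorial : ℝ) ^ (k + 1)
      / (b - a) ^ (s * (k + 1) - 1) *
      ∏ i : Fin (k + 1),
        ((Fin.cons a (Fin.snoc θ b) : Fin (k + 2) → ℝ) i.succ
          - (Fin.cons a (Fin.snoc θ b) : Fin (k + 2) → ℝ) i.castSucc) ^ (s - 1)
  else 0

open scoped Nat

theorem integral_sub_pow_mul_sub_pow (p q : ℕ) (c d : ℝ) :
    ∫ t in c..d, (t - c) ^ p * (d - t) ^ q
      = p ! * q ! / (p + q + 1)! * (d - c) ^ (p + q + 1) := by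
  induction q generalizing p with
  | zero =>
    simp only [pow_zero, mul_one, Nat.factorial_zero, Nat.cast_one, Nat.add_zero]
    rw [intervalIntegral.integral_comp_sub_right (· ^ p), sub_self, integral_pow,
      zero_pow p.succ_ne_zero, sub_zero, Nat.factorial_succ]
    push_cast
    field_simp
  | succ q ih =>
    have hderiv (t : ℝ) : HasDerivAt (fun t => (t - c) ^ (p + 1) * (d - t) ^ (q + 1))
        ((p + 1) * ((t - c) ^ p * (d - t) ^ (q + 1))
          - (q + 1) * ((t - c) ^ (p + 1) * (d - t) ^ q)) t := by
      refine ((((hasDerivAt_id t).sub_const c).fun_pow (p + 1)).mul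
        (((hasDerivAt_id t).const_sub d).fun_pow (q + 1))).congr_deriv ?_
      simp only [id, Nat.add_sub_cancel]
      push_cast
      ring
    have hint (p q : ℕ) : IntervalIntegrable (fun t => (t - c) ^ p * (d - t) ^ q) volume c d :=
      (by fun_prop : Continuous fun t : ℝ => (t - c) ^ p * (d - t) ^ q).intervalIntegrable _ _
    have hftc := intervalIntegral.integral_eq_sub_of_hasDerivAt (fun t _ => hderiv t)
      (((hint p (q + 1)).const_mul _).sub ((hint (p + 1) q).const_mul _))
    rw [intervalIntegral.integral_sub ((hint p (q + 1)).const_mul _)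
      ((hint (p + 1) q).const_mul _), intervalIntegral.integral_const_mul,
      intervalIntegral.integral_const_mul, ih (p + 1)] at hftc
    simp only [sub_self, zero_pow (Nat.succ_ne_zero _), mul_zero, zero_mul] at hftc
    apply mul_left_cancel₀ (by positivity : (p : ℝ) + 1 ≠ 0)
    rw [eq_of_sub_eq_zero hftc, show p + 1 + q + 1 = p + (q + 1) + 1 by omega,
      Nat.factorial_succ p, Nat.factorial_succ q]
    push_cast
    ring

theorem integral_eq_integral_integral_cons {E : Type*} [NormedAddCommGroup E] [NormedSpace ℝ E]
    {k : ℕ} {f : (Fin (k + 1) → ℝ) → E} (hf : Integrable f) :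
    ∫ y, f y = ∫ t : ℝ, ∫ y : Fin k → ℝ, f (Fin.cons t y) := by
  have hmp := (volume_preserving_piFinSuccAbove (fun _ : Fin (k + 1) => ℝ) 0).symm
  rw [← hmp.integral_comp', Measure.volume_eq_prod, integral_prod]
  · congr! with t y
    simp [MeasurableEquiv.piFinSuccAbove_symm_apply]
    rfl
  · rw [← Measure.volume_eq_prod]
    exact (hmp.integrable_comp_emb (MeasurableEquiv.measurableEmbedding _)).2 hf

section GapWeight

variable {k : ℕ}

def withEndpoints (c d : ℝ) (y : Fin k → ℝ) : Fin (k + 2) → ℝ := Fin.cons c (Fin.snoc y d)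

@[simp]
theorem withEndpoints_zero (c d : ℝ) (y : Fin k → ℝ) : withEndpoints c d y 0 = c := rfl

@[simp]
theorem withEndpoints_last (c d : ℝ) (y : Fin k → ℝ) :
    withEndpoints c d y (Fin.last (k + 1)) = d := by
  simp [withEndpoints, ← Fin.succ_last]

theorem withEndpoints_cons (c d t : ℝ) (y : Fin k → ℝ) :
    withEndpoints c d (Fin.cons t y) = Fin.cons c (withEndpoints t d y) := by
  rw [withEndpoints, ← Fin.cons_snoc_eq_snoc_cons]
  rfl

theorem continuous_withEndpoints (c d : ℝ) :
    Continuous (withEndpoints c d : (Fin k → ℝ) → Fin (k + 2) → ℝ) := by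
  unfold withEndpoints
  fun_prop

variable {c d : ℝ} {y : Fin k → ℝ}

theorem withEndpoints_mem_Icc_of_strictMono (h : StrictMono (withEndpoints c d y))
    (i : Fin (k + 2)) : withEndpoints c d y i ∈ Icc c d := by
  simpa using And.intro (h.monotone (Fin.zero_le i)) (h.monotone (Fin.le_last i))

theorem lt_of_strictMono_withEndpoints (h : StrictMono (withEndpoints c d y)) : c < d := by
  simpa using h (Fin.last_pos : 0 < Fin.last (k + 1))

variable (p : ℕ)

noncomputable def gapWeight (c d : ℝ) (y : Fin k → ℝ) : ℝ :=
  if StrictMono (withEndpoints c d y) then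
    ∏ i : Fin (k + 1), (withEndpoints c d y i.succ - withEndpoints c d y i.castSucc) ^ p
  else 0

theorem gapWeight_of_le (h : d ≤ c) : gapWeight p c d y = 0 :=
  if_neg fun hmono => h.not_gt (lt_of_strictMono_withEndpoints hmono)

theorem gapWeight_cons (t : ℝ) :
    gapWeight p c d (Fin.cons t y) = (if c < t then (t - c) ^ p else 0) * gapWeight p t d y := by
  have hmono : StrictMono (withEndpoints c d (Fin.cons t y))
      ↔ c < t ∧ StrictMono (withEndpoints t d y) := by
    rw [withEndpoints_cons]
    exact strictMono_vecCons
  simp only [gapWeight, hmono]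
  rw [withEndpoints_cons, Fin.prod_univ_succ]
  by_cases hct : c < t <;> by_cases ht : StrictMono (withEndpoints t d y) <;>
    simp [hct, ht, Fin.cons_succ]

theorem gapWeight_eq_indicator (c d : ℝ) :
    (gapWeight p c d : (Fin k → ℝ) → ℝ) = {y | StrictMono (withEndpoints c d y)}.indicator
      fun y => ∏ i : Fin (k + 1),
        (withEndpoints c d y i.succ - withEndpoints c d y i.castSucc) ^ p := by
  ext y
  simp [gapWeight, indicator_apply]

theorem integrable_gapWeight (c d : ℝ) :
    Integrable (gapWeight p c d : (Fin k → ℝ) → ℝ) := by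
  rw [gapWeight_eq_indicator]
  set U := {y : Fin k → ℝ | StrictMono (withEndpoints c d y)}
  have hU : IsOpen U := by
    simp only [U, Fin.strictMono_iff_lt_succ, ofPred_forall]
    exact isOpen_iInter_of_finite fun i => isOpen_lt
      ((continuous_apply _).comp (continuous_withEndpoints c d))
      ((continuous_apply _).comp (continuous_withEndpoints c d))
  have hUbox : U ⊆ univ.pi fun _ => Icc c d := fun y hy j _ => by
    simpa [withEndpoints] using withEndpoints_mem_Icc_of_strictMono hy j.castSucc.succ
  have hcont : Continuous fun y : Fin k → ℝ => ∏ i : Fin (k + 1),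
      (withEndpoints c d y i.succ - withEndpoints c d y i.castSucc) ^ p := by
    have := continuous_withEndpoints (k := k) c d
    fun_prop
  exact (integrable_indicator_iff hU.measurableSet).2 <|
    (hcont.continuousOn.integrableOn_compact (μ := volume)
      (isCompact_univ_pi fun _ => isCompact_Icc)).mono_set hUbox

theorem integral_gapWeight (k : ℕ) {c d : ℝ} (hcd : c < d) :
    ∫ y : Fin k → ℝ, gapWeight p c d y
      = (p ! : ℝ) ^ (k + 1) / (p * (k + 1) + k)! * (d - c) ^ (p * (k + 1) + k) := by
  induction k generalizing c with
  | zero =>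
    have hconst (y : Fin 0 → ℝ) : gapWeight p c d y = (d - c) ^ p := by
      have hd : withEndpoints c d y 1 = d := withEndpoints_last c d y
      have hmono : StrictMono (withEndpoints c d y) :=
        Fin.strictMono_iff_lt_succ.2 fun i => by simpa [Fin.fin_one_eq_zero i, hd] using hcd
      simp [gapWeight, hmono]
      rfl
    simp [hconst, measureReal_def, volume_pi, p.factorial_ne_zero]
  | succ k ih =>
    set N := p * (k + 1) + k
    have hslice (t : ℝ) : ∫ y : Fin k → ℝ, gapWeight p c d (Fin.cons t y)
        = (Ioo c d).indicator
            (fun t => (p ! : ℝ) ^ (k + 1) / N ! * ((t - c) ^ p * (d - t) ^ N)) t := by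
      simp_rw [gapWeight_cons, integral_const_mul]
      by_cases hct : c < t
      · by_cases htd : t < d
        · rw [ih htd, indicator_of_mem (show t ∈ Ioo c d from ⟨hct, htd⟩), if_pos hct]
          ring
        · simp [gapWeight_of_le p (not_lt.1 htd), htd]
      · simp [hct]
    rw [integral_eq_integral_integral_cons (integrable_gapWeight p c d), funext hslice,
      integral_indicator measurableSet_Ioo, ← integral_Ioc_eq_integral_Ioo,
      ← intervalIntegral.integral_of_le hcd.le, intervalIntegral.integral_const_mul,
      integral_sub_pow_mul_sub_pow, show p + N + 1 = p * (k + 1 + 1) + (k + 1) by ring]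
    field_simp
    ring

theorem gapD_eq_mul_gapWeight (s : ℕ) (a b : ℝ) {k : ℕ} (θ : Fin k → ℝ) :
    GapD s a b k θ = (s * (k + 1) - 1)! / ((s - 1)! : ℝ) ^ (k + 1) / (b - a) ^ (s * (k + 1) - 1)
      * gapWeight (s - 1) a b θ := by
  unfold GapD gapWeight withEndpoints
  split_ifs <;> simp

end GapWeight

theorem stmt13_general (s m : ℕ) (hs : 1 ≤ s) (a b : ℝ) (θ : ℝ)
    (hθ : θ ∈ Set.Ioo a b) :
    ∫ y : Fin m → ℝ, GapD s a b (m + 1) (Fin.cons θ y)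
      = ((s * (m + 2) - 1).factorial : ℝ)
          / ((s - 1).factorial * (s * (m + 1) - 1).factorial : ℕ)
          / (b - a) ^ (s * (m + 2) - 1)
          * (b - θ) ^ (s * (m + 1) - 1) * (θ - a) ^ (s - 1) := by
  obtain ⟨p, rfl⟩ : ∃ p, s = p + 1 := ⟨s - 1, by omega⟩
  simp_rw [gapD_eq_mul_gapWeight, Nat.add_sub_cancel, gapWeight_cons, if_pos hθ.1, ← mul_assoc]
  rw [integral_const_mul, integral_gapWeight p m hθ.2,
    show (p + 1) * (m + 1) - 1 = p * (m + 1) + m by ring_nf; omega]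
  push_cast
  field_simp
  ring

theorem stmt13 (s m : ℕ) (hs : 1 ≤ s) (a b : ℝ) (hab : a < b) (θ : ℝ)
    (hθ : θ ∈ Set.Ioo a b) :
    ∫ y : Fin m → ℝ, GapD s a b (m + 1) (Fin.cons θ y)
      = ((s * (m + 2) - 1).factorial : ℝ)
          / ((s - 1).factorial * (s * (m + 1) - 1).factorial : ℕ)
          / (b - a) ^ (s * (m + 2) - 1)
          * (b - θ) ^ (s * (m + 1) - 1) * (θ - a) ^ (s - 1) :=
  stmt13_general s m hs a b θ hθ
end

section
/- Let f,g,h:ℝ⁺×ℝ⁺→ℝ⁺ with g symmetric, and suppose Λ¹_{a,b}(x)=f(a,b)·g(b,x)·h(x,a) holds for all x∈(a∧b,a∨b), where Λ¹_{a,b} is a symmetric family of densities (Λ¹_{a,b}(x)=Λ¹_{b,a}(x)). If also f is symmetric, then there exists a function c:ℝ⁺→ℝ⁺ such that h(x,a)=c(x)·g(x,a) for all a,x with g(a,x)·h(x,a)>0. -/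
theorem stmt15 (Λ : ℝ → ℝ → ℝ → ℝ) (f g h : ℝ → ℝ → ℝ)
    (hΛsymm : ∀ a b x : ℝ, Λ a b x = Λ b a x)
    (hgsymm : ∀ x y : ℝ, g x y = g y x)
    (hfsymm : ∀ a b : ℝ, f a b = f b a)
    (hgpos : ∀ x y : ℝ, 0 < x → 0 < y → x ≠ y → 0 < g x y)
    (hhpos : ∀ x y : ℝ, 0 < x → 0 < y → x ≠ y → 0 < h x y)
    (hfpos : ∀ a b : ℝ, 0 < a → 0 < b → a ≠ b → 0 < f a b)
    (hfact : ∀ a b x : ℝ, 0 < a → 0 < b → x ∈ Set.Ioo (min a b) (max a b) →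
      Λ a b x = f a b * g b x * h x a) :
    ∃ c : ℝ → ℝ, ∀ a x : ℝ, 0 < a → 0 < x → a ≠ x →
      h x a = c x * g x a := by
  have key : ∀ a b x : ℝ, 0 < a → 0 < b → x ∈ Set.Ioo (min a b) (max a b) →
      h x a * g x b = h x b * g x a := by
    intro a b x ha hb hx
    have hab : a ≠ b := by
      rintro rfl
      simp at hx
    have h1 := hfact a b x ha hb hx
    have hx' : x ∈ Set.Ioo (min b a) (max b a) := by
      rwa [min_comm, max_comm]
    have h2 := hfact b a x hb ha hx'
    have hΛ := hΛsymm a b x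
    rw [h1, h2, hfsymm a b] at hΛ
    have hf := (hfpos b a hb ha hab.symm).ne'
    have heq : g b x * h x a = g a x * h x b :=
      mul_left_cancel₀ hf (by rw [← mul_assoc, ← mul_assoc]; exact hΛ)
    rw [hgsymm x b, hgsymm x a, mul_comm (h x a), mul_comm (h x b)]
    exact heq
  refine ⟨fun x => h x (2 * x) / g x (2 * x), ?_⟩
  intro a x ha hx hax
  have h2x : (0:ℝ) < 2 * x := by linarith
  have hx2x : x ≠ 2 * x := by intro hh; linarith
  have hgx2 : 0 < g x (2 * x) := hgpos x (2 * x) hx h2x hx2x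
  rcases lt_or_gt_of_ne hax with hlt | hgt
  · -- a < x, use b = 2x, x ∈ (a, 2x)
    have hmem : x ∈ Set.Ioo (min a (2*x)) (max a (2*x)) := by
      constructor
      · exact lt_of_le_of_lt (min_le_left _ _) hlt
      · exact lt_of_lt_of_le (by linarith) (le_max_right _ _)
    have := key a (2*x) x ha h2x hmem
    field_simp
    linarith [this]
  · -- a > x, use b = x/2, then relate via key (x/2) (2x)
    have hx2 : (0:ℝ) < x / 2 := by linarith
    have hmem1 : x ∈ Set.Ioo (min a (x/2)) (max a (x/2)) := by
      constructor
      · exact lt_of_le_of_lt (min_le_right _ _) (by linarith)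
      · exact lt_of_lt_of_le hgt (le_max_left _ _)
    have k1 := key a (x/2) x ha hx2 hmem1
    have hmem2 : x ∈ Set.Ioo (min (x/2) (2*x)) (max (x/2) (2*x)) := by
      constructor
      · exact lt_of_le_of_lt (min_le_left _ _) (by linarith)
      · exact lt_of_lt_of_le (by linarith) (le_max_right _ _)
    have k2 := key (x/2) (2*x) x hx2 h2x hmem2
    have hgxa : 0 < g x a := hgpos x a hx ha hax.symm
    have hgx2' : 0 < g x (x/2) := hgpos x (x/2) hx hx2 (by intro hh; linarith)
    -- from k1: h x a * g x (x/2) = h x (x/2) * g x a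
    -- from k2: h x (x/2) * g x (2x) = h x (2x) * g x (x/2)
    field_simp
    nlinarith [k1, k2, hgx2.le, hgx2'.le, hgxa.le]
end

section
/- Let f:(a,b)→[0,∞) be integrable with ∫_a^b f = 1, and suppose f is a fixed point of Q∘P where (Pf)(x)=∫_a^b f(y)·k₁(y,x)dy with k₁(y,x)>0 iff y<x<b, and (Qg)(x)=∫_a^b g(y)·k₂(y,x)dy with k₂(y,x)>0 iff a<x<y, and both kernels are probability densities in x for each fixed y (so k₁(y,·) has support exactly (y,b) and k₂(y,·) has support exactly (a,y)). Then λ({x∈(a,b): f(x)>0}∩(a,c))>0 for every c∈(a,b), and moreover ess sup(supp(Pf)) = b and ess inf(supp(f)) = a. -/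
open MeasureTheory Set

lemma aux19 (a b : ℝ) (hab : a < b) (f : ℝ → ℝ) (k₁ k₂ : ℝ → ℝ → ℝ)
    (h : ℝ → ℝ) (hhdef : ∀ y, h y = ∫ z in Set.Ioo a b, f z * k₁ z y)
    (hfmeas : Measurable f)
    (hk₁meas : Measurable fun p : ℝ × ℝ => k₁ p.1 p.2)
    (hk₂meas : Measurable fun p : ℝ × ℝ => k₂ p.1 p.2)
    (hfnonneg : ∀ x, 0 ≤ f x)
    (hfint : IntegrableOn f (Set.Ioo a b))
    (hfone : ∫ x in Set.Ioo a b, f x = 1)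
    (hfsupp : ∀ x, x ∉ Set.Ioo a b → f x = 0)
    (hk₁nonneg : ∀ y x, 0 ≤ k₁ y x) (hk₂nonneg : ∀ y x, 0 ≤ k₂ y x)
    (hk₁supp : ∀ y x, 0 < k₁ y x ↔ y < x ∧ x < b)
    (hk₂supp : ∀ y x, 0 < k₂ y x ↔ a < x ∧ x < y)
    (hk₁prob : ∀ y ∈ Set.Ioo a b, ∫ x, k₁ y x = 1)
    (hk₂prob : ∀ y ∈ Set.Ioo a b, ∫ x, k₂ y x = 1)
    (hfix : ∀ x, f x = ∫ y in Set.Ioo a b, h y * k₂ y x) :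
    (∀ c, a < c → c ≤ b → 0 < volume {x | x ∈ Set.Ioo a c ∧ 0 < f x})
    ∧ sSup {z : ℝ | volume (Set.Ici z ∩ {x | 0 < h x}) ≠ 0} = b
    ∧ sInf {z : ℝ | volume (Set.Iic z ∩ {x | 0 < f x}) ≠ 0} = a := by
  have one_ne : (1 : ENNReal) ≠ ⊤ := ENNReal.one_ne_top
  set s : Set ℝ := Set.Ioo a b with hs
  have hsmeas : MeasurableSet s := measurableSet_Ioo
  -- basic measurability of sections
  have hk₁m : ∀ y, Measurable fun z => k₁ z y := fun y =>
    hk₁meas.comp (measurable_id.prodMk measurable_const)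
  have hk₂m : ∀ x, Measurable fun y => k₂ y x := fun x =>
    hk₂meas.comp (measurable_id.prodMk measurable_const)
  have hk₁m2 : ∀ z, Measurable fun y => k₁ z y := fun z =>
    hk₁meas.comp (measurable_const.prodMk measurable_id)
  have hk₂m2 : ∀ y, Measurable fun x => k₂ y x := fun y =>
    hk₂meas.comp (measurable_const.prodMk measurable_id)
  -- kernels vanish outside their support
  have hk₁zero : ∀ z y, ¬(z < y ∧ y < b) → k₁ z y = 0 := fun z y hzy =>
    le_antisymm (not_lt.1 fun hp => hzy ((hk₁supp z y).1 hp)) (hk₁nonneg z y)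
  -- kernels have lintegral one on s
  have hk₁lint : ∀ z ∈ s, ∫⁻ y in s, ENNReal.ofReal (k₁ z y) = 1 := by
    intro z hz
    have hint : Integrable (fun y => k₁ z y) := by
      by_contra hni
      have := hk₁prob z hz
      rw [integral_undef hni] at this
      exact zero_ne_one this
    have h1 : ∫⁻ y, ENNReal.ofReal (k₁ z y) = 1 := by
      rw [← ofReal_integral_eq_lintegral_ofReal hint
        (Filter.Eventually.of_forall (hk₁nonneg z)), hk₁prob z hz, ENNReal.ofReal_one]
    rw [← h1]
    apply setLIntegral_eq_of_support_subset
    intro y hy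
    have hpos : 0 < k₁ z y := by
      by_contra hc
      exact hy (by simp [ENNReal.ofReal_eq_zero.2 (not_lt.1 hc)])
    obtain ⟨h1', h2'⟩ := (hk₁supp z y).1 hpos
    exact ⟨lt_trans hz.1 h1', h2'⟩
  have hk₂lint : ∀ y ∈ s, ∫⁻ x in s, ENNReal.ofReal (k₂ y x) = 1 := by
    intro y hy
    have hint : Integrable (fun x => k₂ y x) := by
      by_contra hni
      have := hk₂prob y hy
      rw [integral_undef hni] at this
      exact zero_ne_one this
    have h1 : ∫⁻ x, ENNReal.ofReal (k₂ y x) = 1 := by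
      rw [← ofReal_integral_eq_lintegral_ofReal hint
        (Filter.Eventually.of_forall (hk₂nonneg y)), hk₂prob y hy, ENNReal.ofReal_one]
    rw [← h1]
    apply setLIntegral_eq_of_support_subset
    intro x hx
    have hpos : 0 < k₂ y x := by
      by_contra hc
      exact hx (by simp [ENNReal.ofReal_eq_zero.2 (not_lt.1 hc)])
    obtain ⟨h1', h2'⟩ := (hk₂supp y x).1 hpos
    exact ⟨h1', lt_trans h2' hy.2⟩
  -- lintegral of f
  have hflint : ∫⁻ z in s, ENNReal.ofReal (f z) = 1 := by
    rw [← ofReal_integral_eq_lintegral_ofReal hfint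
      (Filter.Eventually.of_forall hfnonneg), hfone, ENNReal.ofReal_one]
  -- K
  set K : ℝ → ENNReal := fun y => ∫⁻ z in s, ENNReal.ofReal (f z) * ENNReal.ofReal (k₁ z y)
    with hK
  have hKim : Measurable fun p : ℝ × ℝ =>
      ENNReal.ofReal (f p.2) * ENNReal.ofReal (k₁ p.2 p.1) :=
    (hfmeas.comp measurable_snd).ennreal_ofReal.mul
      ((hk₁meas.comp (measurable_snd.prodMk measurable_fst)).ennreal_ofReal)
  have hKmeas : Measurable K := by
    rw [hK]
    exact Measurable.lintegral_prod_right
      (f := fun y z => ENNReal.ofReal (f z) * ENNReal.ofReal (k₁ z y)) hKim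
  have hhK : ∀ y, h y = (K y).toReal := by
    intro y
    rw [hhdef y, integral_eq_lintegral_of_nonneg_ae
      (Filter.Eventually.of_forall fun z => mul_nonneg (hfnonneg z) (hk₁nonneg z y))
      ((hfmeas.mul (hk₁m y)).aestronglyMeasurable)]
    congr 1
    exact lintegral_congr fun z => ENNReal.ofReal_mul (hfnonneg z)
  have hhmeas : Measurable h := by
    have heq : h = fun y => (K y).toReal := funext hhK
    rw [heq]; exact hKmeas.ennreal_toReal
  have hhnonneg : ∀ y, 0 ≤ h y := fun y => by
    rw [hhdef y]
    exact integral_nonneg fun z => mul_nonneg (hfnonneg z) (hk₁nonneg z y)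
  have hhzero : ∀ y, y ∉ s → h y = 0 := by
    intro y hy
    rw [hhdef y]
    rw [setIntegral_congr_fun hsmeas (g := fun _ => (0:ℝ)) ?_, integral_zero]
    intro z hz
    have hz0 : k₁ z y = 0 := by
      apply hk₁zero
      rintro ⟨h1', h2'⟩
      exact hy ⟨lt_trans hz.1 h1', h2'⟩
    simp [hz0]
  -- Tonelli: ∫⁻ K = 1
  have hKint : ∫⁻ y in s, K y = 1 := by
    have hswap : ∫⁻ y in s, K y
        = ∫⁻ z in s, ∫⁻ y in s, ENNReal.ofReal (f z) * ENNReal.ofReal (k₁ z y) := by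
      simp only [hK]
      exact lintegral_lintegral_swap hKim.aemeasurable
    rw [hswap, ← hflint]
    apply setLIntegral_congr_fun hsmeas
    intro z hz
    dsimp only
    rw [lintegral_const_mul _ ((hk₁m2 z).ennreal_ofReal), hk₁lint z hz, mul_one]
  have hF1 : ∀ᵐ y ∂(volume.restrict s), ENNReal.ofReal (h y) = K y := by
    filter_upwards [ae_lt_top hKmeas (by rw [hKint]; exact one_ne)] with y hy
    rw [hhK y, ENNReal.ofReal_toReal hy.ne]
  -- G
  set G : ℝ → ENNReal := fun x => ∫⁻ y in s, ENNReal.ofReal (h y) * ENNReal.ofReal (k₂ y x)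
    with hG
  have hGim : Measurable fun p : ℝ × ℝ =>
      ENNReal.ofReal (h p.2) * ENNReal.ofReal (k₂ p.2 p.1) :=
    (hhmeas.comp measurable_snd).ennreal_ofReal.mul
      ((hk₂meas.comp (measurable_snd.prodMk measurable_fst)).ennreal_ofReal)
  have hGmeas : Measurable G := by
    rw [hG]
    exact Measurable.lintegral_prod_right
      (f := fun x y => ENNReal.ofReal (h y) * ENNReal.ofReal (k₂ y x)) hGim
  have hfG : ∀ x, f x = (G x).toReal := by
    intro x
    rw [hfix x, integral_eq_lintegral_of_nonneg_ae
      (Filter.Eventually.of_forall fun y => mul_nonneg (hhnonneg y) (hk₂nonneg y x))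
      ((hhmeas.mul (hk₂m x)).aestronglyMeasurable)]
    congr 1
    exact lintegral_congr fun y => ENNReal.ofReal_mul (hhnonneg y)
  have hGint : ∫⁻ x in s, G x = 1 := by
    have hswap : ∫⁻ x in s, G x
        = ∫⁻ y in s, ∫⁻ x in s, ENNReal.ofReal (h y) * ENNReal.ofReal (k₂ y x) := by
      simp only [hG]
      exact lintegral_lintegral_swap hGim.aemeasurable
    rw [hswap, ← hKint, ← lintegral_congr_ae hF1]
    apply setLIntegral_congr_fun hsmeas
    intro y hy
    dsimp only
    rw [lintegral_const_mul _ ((hk₂m2 y).ennreal_ofReal), hk₂lint y hy, mul_one]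
  have hF2 : ∀ᵐ x ∂(volume.restrict s), ENNReal.ofReal (f x) = G x := by
    filter_upwards [ae_lt_top hGmeas (by rw [hGint]; exact one_ne)] with x hx
    rw [hfG x, ENNReal.ofReal_toReal hx.ne]
  -- positivity sets
  set E : Set ℝ := {x | 0 < f x} with hE
  set H : Set ℝ := {x | 0 < h x} with hH
  have hEsub : E ⊆ s := fun x hx => by
    by_contra hc
    rw [hE] at hx
    simp only [mem_setOf_eq, hfsupp x hc, lt_self_iff_false] at hx
  have hHsub : H ⊆ s := fun x hx => by
    by_contra hc
    rw [hH] at hx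
    simp only [mem_setOf_eq, hhzero x hc, lt_self_iff_false] at hx
  have hEpos : 0 < volume E := by
    have h1 : (0 : ENNReal) < ∫⁻ z in s, ENNReal.ofReal (f z) := by
      rw [hflint]; exact zero_lt_one
    rw [lintegral_pos_iff_support hfmeas.ennreal_ofReal,
      Measure.restrict_apply (measurableSet_support hfmeas.ennreal_ofReal)] at h1
    refine lt_of_lt_of_le h1 (measure_mono ?_)
    intro x hx
    have hx1 := hx.1
    rw [Function.mem_support, Ne, ENNReal.ofReal_eq_zero] at hx1
    rw [hE, mem_setOf_eq]
    exact lt_of_not_ge hx1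
  -- positivity equivalences
  have hKpos : ∀ y ∈ s, (0 < K y ↔ 0 < volume (E ∩ Set.Iio y)) := by
    intro y hy
    have hm : Measurable fun z => ENNReal.ofReal (f z) * ENNReal.ofReal (k₁ z y) :=
      hfmeas.ennreal_ofReal.mul ((hk₁m y).ennreal_ofReal)
    rw [hK]
    rw [lintegral_pos_iff_support hm, Measure.restrict_apply (measurableSet_support hm)]
    have hset : (Function.support fun z => ENNReal.ofReal (f z) * ENNReal.ofReal (k₁ z y)) ∩ s
        = E ∩ Set.Iio y := by
      ext z
      simp only [Function.mem_support, Ne, mul_eq_zero, not_or, ENNReal.ofReal_eq_zero,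
        not_le, mem_inter_iff, mem_setOf_eq, mem_Iio, hE]
      constructor
      · rintro ⟨⟨hf1, hk1⟩, _⟩
        exact ⟨hf1, ((hk₁supp z y).1 hk1).1⟩
      · rintro ⟨hf1, hzy⟩
        have hzs : z ∈ s := hEsub hf1
        exact ⟨⟨hf1, (hk₁supp z y).2 ⟨hzy, hy.2⟩⟩, hzs⟩
    rw [hset]
  have hGpos : ∀ x ∈ s, (0 < G x ↔ 0 < volume (H ∩ Set.Ioi x)) := by
    intro x hx
    have hm : Measurable fun y => ENNReal.ofReal (h y) * ENNReal.ofReal (k₂ y x) :=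
      hhmeas.ennreal_ofReal.mul ((hk₂m x).ennreal_ofReal)
    rw [hG]
    rw [lintegral_pos_iff_support hm, Measure.restrict_apply (measurableSet_support hm)]
    have hset : (Function.support fun y => ENNReal.ofReal (h y) * ENNReal.ofReal (k₂ y x)) ∩ s
        = H ∩ Set.Ioi x := by
      ext y
      simp only [Function.mem_support, Ne, mul_eq_zero, not_or, ENNReal.ofReal_eq_zero,
        not_le, mem_inter_iff, mem_setOf_eq, mem_Ioi, hH]
      constructor
      · rintro ⟨⟨hh1, hk1⟩, _⟩
        exact ⟨hh1, ((hk₂supp y x).1 hk1).2⟩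
      · rintro ⟨hh1, hxy⟩
        have hys : y ∈ s := hHsub hh1
        exact ⟨⟨hh1, (hk₂supp y x).2 ⟨hx.1, hxy⟩⟩, hys⟩
    rw [hset]
  -- the essential infimum of E
  set S : Set ℝ := {z : ℝ | volume (Set.Iic z ∩ E) ≠ 0} with hSdef
  have hbS : b ∈ S := by
    have hsub : E ⊆ Set.Iic b ∩ E := fun x hx => ⟨le_of_lt (hEsub hx).2, hx⟩
    have hp : 0 < volume (Set.Iic b ∩ E) := lt_of_lt_of_le hEpos (measure_mono hsub)
    rw [hSdef]
    exact hp.ne'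
  have hSlb : ∀ z ∈ S, a ≤ z := by
    intro z hz
    by_contra hc
    push_neg at hc
    apply hz
    have hemp : Set.Iic z ∩ E = ∅ := by
      ext x
      simp only [mem_inter_iff, mem_Iic, mem_empty_iff_false, iff_false, not_and]
      intro hxz hxE
      exact absurd (hEsub hxE).1 (not_lt.2 (hxz.trans hc.le))
    rw [hSdef, mem_setOf_eq] at *
    rw [hemp, measure_empty]
  have hexists : ∃ z ∈ S, z < b := by
    by_contra hc
    push_neg at hc
    have hnull : ∀ n : ℕ, volume (Set.Iic (b - 1/(n+1)) ∩ E) = 0 := by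
      intro n
      by_contra hn
      have hzS : (b - 1/((n:ℝ)+1)) ∈ S := hn
      have hble := hc _ hzS
      have hpos : (0:ℝ) < 1/((n:ℝ)+1) := by positivity
      linarith
    have hcover : E ⊆ ⋃ n : ℕ, (Set.Iic (b - 1/((n:ℝ)+1)) ∩ E) := by
      intro x hx
      obtain ⟨n, hn⟩ := exists_nat_one_div_lt (sub_pos.2 (hEsub hx).2)
      refine mem_iUnion.2 ⟨n, ⟨?_, hx⟩⟩
      simp only [mem_Iic]
      linarith
    exact hEpos.ne' (measure_mono_null hcover (measure_iUnion_null hnull))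
  have hSne : S.Nonempty := ⟨b, hbS⟩
  have hSbdd : BddBelow S := ⟨a, hSlb⟩
  set m := sInf S with hm
  have ham : a ≤ m := le_csInf hSne hSlb
  have hmb : m < b := by
    obtain ⟨z, hzS, hzb⟩ := hexists
    exact lt_of_le_of_lt (csInf_le hSbdd hzS) hzb
  have hEbelow : ∀ y, m < y → 0 < volume (E ∩ Set.Iio y) := by
    intro y hy
    obtain ⟨z, hzS, hzy⟩ := exists_lt_of_csInf_lt hSne hy
    have hsub : Set.Iic z ∩ E ⊆ E ∩ Set.Iio y := fun x hx => ⟨hx.2, lt_of_le_of_lt hx.1 hzy⟩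
    have hzS' : volume (Set.Iic z ∩ E) ≠ 0 := hzS
    exact lt_of_lt_of_le (pos_iff_ne_zero.2 hzS') (measure_mono hsub)
  -- a.e. h > 0 on (m, b)
  have hHae : ∀ᵐ y ∂(volume.restrict s), y ∈ Set.Ioo m b → 0 < h y := by
    filter_upwards [hF1, ae_restrict_mem hsmeas] with y h1 h2 h3
    have hpos : 0 < K y := (hKpos y h2).2 (hEbelow y h3.1)
    rw [← h1] at hpos
    exact ENNReal.ofReal_pos.1 hpos
  have hNH : volume (Set.Ioo m b \ H) = 0 := by
    rw [ae_iff, Measure.restrict_apply' hsmeas] at hHae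
    refine measure_mono_null ?_ hHae
    intro y hy
    exact ⟨fun himp => hy.2 (himp hy.1), ⟨lt_of_le_of_lt ham hy.1.1, hy.1.2⟩⟩
  have hHtail : ∀ x, x < b → 0 < volume (H ∩ Set.Ioi x) := by
    intro x hx
    have hsub : Set.Ioo (max m x) b \ (Set.Ioo m b \ H) ⊆ H ∩ Set.Ioi x := by
      intro w hw
      obtain ⟨⟨hw1, hw2⟩, hw3⟩ := hw
      have hwH : w ∈ H := by
        by_contra hc
        exact hw3 ⟨⟨lt_of_le_of_lt (le_max_left m x) hw1, hw2⟩, hc⟩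
      exact ⟨hwH, lt_of_le_of_lt (le_max_right m x) hw1⟩
    refine lt_of_lt_of_le ?_ (measure_mono hsub)
    rw [measure_diff_null hNH, Real.volume_Ioo]
    exact ENNReal.ofReal_pos.2 (sub_pos.2 (max_lt hmb hx))
  -- a.e. f > 0 on s
  have hfae : ∀ᵐ x ∂(volume.restrict s), 0 < f x := by
    filter_upwards [hF2, ae_restrict_mem hsmeas] with x h1 h2
    have hpos : 0 < G x := (hGpos x h2).2 (hHtail x h2.2)
    rw [← h1] at hpos
    exact ENNReal.ofReal_pos.1 hpos
  have hNE : volume (s \ E) = 0 := by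
    rw [ae_iff, Measure.restrict_apply' hsmeas] at hfae
    refine measure_mono_null ?_ hfae
    intro x hx
    exact ⟨hx.2, hx.1⟩
  -- conclusions
  refine ⟨?_, ?_, ?_⟩
  · intro c hac hcb
    have hsub : Set.Ioo a c \ (s \ E) ⊆ {x | x ∈ Set.Ioo a c ∧ 0 < f x} := by
      intro x hx
      obtain ⟨hx1, hx2⟩ := hx
      have hxs : x ∈ s := ⟨hx1.1, lt_of_lt_of_le hx1.2 hcb⟩
      have hxE : x ∈ E := by
        by_contra hc
        exact hx2 ⟨hxs, hc⟩
      exact ⟨hx1, hxE⟩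
    refine lt_of_lt_of_le ?_ (measure_mono hsub)
    rw [measure_diff_null hNE, Real.volume_Ioo]
    exact ENNReal.ofReal_pos.2 (sub_pos.2 hac)
  · have hset : {z : ℝ | volume (Set.Ici z ∩ H) ≠ 0} = Set.Iio b := by
      ext z
      simp only [mem_setOf_eq, mem_Iio]
      constructor
      · intro hz
        by_contra hc
        push_neg at hc
        apply hz
        have hemp : Set.Ici z ∩ H = ∅ := by
          ext w
          simp only [mem_inter_iff, mem_Ici, mem_empty_iff_false, iff_false, not_and]
          intro hzw hwH
          exact absurd (hHsub hwH).2 (not_lt.2 (hc.trans hzw))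
        rw [hemp, measure_empty]
      · intro hz
        have hsub : Set.Ioo (max m z) b \ (Set.Ioo m b \ H) ⊆ Set.Ici z ∩ H := by
          intro w hw
          obtain ⟨⟨hw1, hw2⟩, hw3⟩ := hw
          have hwH : w ∈ H := by
            by_contra hc
            exact hw3 ⟨⟨lt_of_le_of_lt (le_max_left m z) hw1, hw2⟩, hc⟩
          exact ⟨le_of_lt (lt_of_le_of_lt (le_max_right m z) hw1), hwH⟩
        have hpos : 0 < volume (Set.Ici z ∩ H) := by
          refine lt_of_lt_of_le ?_ (measure_mono hsub)
          rw [measure_diff_null hNH, Real.volume_Ioo]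
          exact ENNReal.ofReal_pos.2 (sub_pos.2 (max_lt hmb hz))
        exact hpos.ne'
    rw [hset]
    exact csSup_Iio
  · have hset : {z : ℝ | volume (Set.Iic z ∩ E) ≠ 0} = Set.Ioi a := by
      ext z
      simp only [mem_setOf_eq, mem_Ioi]
      constructor
      · intro hz
        by_contra hc
        push_neg at hc
        apply hz
        have hemp : Set.Iic z ∩ E = ∅ := by
          ext w
          simp only [mem_inter_iff, mem_Iic, mem_empty_iff_false, iff_false, not_and]
          intro hwz hwE
          exact absurd (hEsub hwE).1 (not_lt.2 (hwz.trans hc))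
        rw [hemp, measure_empty]
      · intro hz
        have hsub : Set.Ioo a (min z b) \ (s \ E) ⊆ Set.Iic z ∩ E := by
          intro w hw
          obtain ⟨⟨hw1, hw2⟩, hw3⟩ := hw
          have hws : w ∈ s := ⟨hw1, lt_of_lt_of_le hw2 (min_le_right z b)⟩
          have hwE : w ∈ E := by
            by_contra hc
            exact hw3 ⟨hws, hc⟩
          exact ⟨le_of_lt (lt_of_lt_of_le hw2 (min_le_left z b)), hwE⟩
        have hpos : 0 < volume (Set.Iic z ∩ E) := by
          refine lt_of_lt_of_le ?_ (measure_mono hsub)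
          rw [measure_diff_null hNE, Real.volume_Ioo]
          exact ENNReal.ofReal_pos.2 (sub_pos.2 (lt_min hz hab))
        exact hpos.ne'
    rw [hm, hSdef, hset]
    exact csInf_Ioi

theorem stmt19 (a b : ℝ) (hab : a < b) (f : ℝ → ℝ) (k₁ k₂ : ℝ → ℝ → ℝ)
    (hfmeas : Measurable f)
    (hk₁meas : Measurable fun p : ℝ × ℝ => k₁ p.1 p.2)
    (hk₂meas : Measurable fun p : ℝ × ℝ => k₂ p.1 p.2)
    (hfnonneg : ∀ x, 0 ≤ f x)
    (hfint : IntegrableOn f (Set.Ioo a b))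
    (hfone : ∫ x in Set.Ioo a b, f x = 1)
    (hfsupp : ∀ x, x ∉ Set.Ioo a b → f x = 0)
    (hk₁nonneg : ∀ y x, 0 ≤ k₁ y x) (hk₂nonneg : ∀ y x, 0 ≤ k₂ y x)
    (hk₁supp : ∀ y x, 0 < k₁ y x ↔ y < x ∧ x < b)
    (hk₂supp : ∀ y x, 0 < k₂ y x ↔ a < x ∧ x < y)
    (hk₁prob : ∀ y ∈ Set.Ioo a b, ∫ x, k₁ y x = 1)
    (hk₂prob : ∀ y ∈ Set.Ioo a b, ∫ x, k₂ y x = 1)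
    (hfix : ∀ x, f x = ∫ y in Set.Ioo a b, (∫ z in Set.Ioo a b, f z * k₁ z y) * k₂ y x) :
    (∀ c, a < c → c ≤ b → 0 < volume {x | x ∈ Set.Ioo a c ∧ 0 < f x})
    ∧ sSup {z : ℝ |
        volume (Set.Ici z ∩ {x | 0 < ∫ y in Set.Ioo a b, f y * k₁ y x}) ≠ 0} = b
    ∧ sInf {z : ℝ | volume (Set.Iic z ∩ {x | 0 < f x}) ≠ 0} = a := by
  exact aux19 a b hab f k₁ k₂ (fun y => ∫ z in Set.Ioo a b, f z * k₁ z y) (fun y => rfl)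
    hfmeas hk₁meas hk₂meas hfnonneg hfint hfone hfsupp hk₁nonneg hk₂nonneg
    hk₁supp hk₂supp hk₁prob hk₂prob hfix
end
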